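/- arXiv:1403.4836 — 8 statements merged into one kernel-verified Lean document; each statement's English description precedes it below -/
import Mathlib

section
/- Let G be a finite group whose order is square-free (no prime squared divides |G|). Then G is solvable. -/
/-- A finite group of square-free order is solvable. -/
theorem squarefree_order_isSolvable (G : Type*) [Group G] [Fintype G]
    (h : Squarefree (Fintype.card G)) : IsSolvable G :=
  have : IsZGroup G := .of_squarefree (Nat.card_eq_fintype_card (α := G) ▸ h)
  (inferInstance : Group.IsSolvable G)
end

section
/- Let G be a finite group whose order is square-free. Then two subgroups of G are conjugate in G if and only if they have the same order. -/
/-!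
Induction on `|G|`. Let `p` be the smallest prime dividing `|G|`. A Sylow `p`-subgroup has
order `p`, hence is cyclic, so Burnside's transfer theorem gives a normal subgroup `N` of index
`p`; as `|G|` is square-free, `p ∤ |N|`. Subgroups of order prime to `p` lie in `N`, where the
induction hypothesis conjugates them. If `p` divides `|H| = |K|`, then `H ⊓ N` and `K ⊓ N` have
index `p` in `H` and `K`; conjugating inside `N` we may assume `H ⊓ N = K ⊓ N = M`. Now
`H = M ⊔ P` and `K = M ⊔ Q` with `|P| = |Q| = p`, and `P`, `Q` are Sylow subgroups of the
normalizer of `M`, which contains `H` and `K`. A conjugation inside that normalizer carries `P`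
to `Q` and fixes `M`, hence carries `H` to `K`.
-/

open Pointwise

namespace Subgroup

variable {G : Type*} [Group G]

theorem card_conj_smul (g : G) (H : Subgroup G) :
    Nat.card (MulAut.conj g • H : Subgroup G) = Nat.card H :=
  (Nat.card_congr (equivSMul (MulAut.conj g) H).toEquiv).symm

theorem conj_smul_eq_self_of_mem_normalizer {H : Subgroup G} {g : G}
    (hg : g ∈ normalizer (H : Set G)) : MulAut.conj g • H = H :=
  mem_normalizer_iff_map_conj_eq.mp hg

theorem card_subgroupOf_of_le {H K : Subgroup G} (h : H ≤ K) :
    Nat.card (H.subgroupOf K) = Nat.card H :=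
  Nat.card_congr (subgroupOfEquivOfLe h).toEquiv

theorem conj_smul_eq_of_conj_smul_subgroupOf_eq {H K N : Subgroup G} (hH : H ≤ N) (hK : K ≤ N)
    {n : N} (h : MulAut.conj n • H.subgroupOf N = K.subgroupOf N) :
    MulAut.conj (n : G) • H = K := by
  rwa [conj_smul_subgroupOf hH, subgroupOf_inj, inf_of_le_left (conj_smul_le_of_le hH n),
    inf_of_le_left hK] at h

theorem card_inf_mul_relIndex (H K : Subgroup G) :
    Nat.card (H ⊓ K : Subgroup G) * K.relIndex H = Nat.card H := by
  rw [← inf_relIndex_left, ← relIndex_bot_left, ← relIndex_bot_left,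
    relIndex_mul_relIndex _ _ _ bot_le inf_le_left]

theorem card_inf_mul_index_of_not_le {N J : Subgroup G} [N.Normal] (hp : N.index.Prime)
    (hJ : ¬ J ≤ N) : Nat.card (J ⊓ N : Subgroup G) * N.index = Nat.card J := by
  rw [← (hp.eq_one_or_self_of_dvd _ (relIndex_dvd_index_of_normal N J)).resolve_left
    (mt relIndex_eq_one.mp hJ), card_inf_mul_relIndex]

theorem not_dvd_card_of_dvd_index {H : Subgroup G} (hG : Squarefree (Nat.card G)) {p : ℕ}
    (hp : p.Prime) (h : p ∣ H.index) : ¬ p ∣ Nat.card H := fun hH =>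
  hp.not_isUnit (hG p (card_mul_index H ▸ mul_dvd_mul hH h))

theorem sup_eq_of_card_eq_mul [Finite G] {M P J : Subgroup G} (hM : M ≤ J) (hP : P ≤ J)
    (hcop : (Nat.card M).Coprime (Nat.card P)) (hJ : Nat.card J = Nat.card M * Nat.card P) :
    M ⊔ P = J := by
  refine eq_of_le_of_card_ge (sup_le hM hP) (Nat.le_of_dvd Nat.card_pos ?_)
  rw [hJ]
  exact hcop.mul_dvd_of_dvd_of_dvd (card_dvd_of_le le_sup_left) (card_dvd_of_le le_sup_right)

theorem exists_card_eq_prime_sup_eq [Finite G] {p : ℕ} [Fact p.Prime] {M J : Subgroup G}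
    (hMJ : M ≤ J) (hM : ¬ p ∣ Nat.card M) (hJ : Nat.card J = Nat.card M * p) :
    ∃ P ≤ J, Nat.card P = p ∧ M ⊔ P = J := by
  obtain ⟨x, hx⟩ := exists_prime_orderOf_dvd_card' (G := J) p (hJ ▸ dvd_mul_left _ _)
  have hP : Nat.card (zpowers (x : G)) = p := by rw [Nat.card_zpowers, orderOf_coe, hx]
  have hPJ : zpowers (x : G) ≤ J := zpowers_le.mpr x.2
  refine ⟨_, hPJ, hP, sup_eq_of_card_eq_mul hMJ hPJ ?_ (hP ▸ hJ)⟩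
  rw [hP, Nat.coprime_comm]
  exact (Nat.Prime.coprime_iff_not_dvd Fact.out).mpr hM

theorem exists_mem_conj_eq_of_card_eq_prime [Finite G] {p : ℕ} [Fact p.Prime]
    {L P Q : Subgroup G} (hL : Squarefree (Nat.card L)) (hPL : P ≤ L) (hQL : Q ≤ L)
    (hP : Nat.card P = p) (hQ : Nat.card Q = p) : ∃ g ∈ L, MulAut.conj g • P = Q := by
  have hpL : (Nat.card L).factorization p = 1 :=
    Nat.factorization_eq_one_of_squarefree hL Fact.out (hP ▸ card_dvd_of_le hPL)
  let P' : Sylow p L :=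
    .ofCard (P.subgroupOf L) (by rw [card_subgroupOf_of_le hPL, hP, hpL, pow_one])
  let Q' : Sylow p L :=
    .ofCard (Q.subgroupOf L) (by rw [card_subgroupOf_of_le hQL, hQ, hpL, pow_one])
  obtain ⟨n, hn⟩ := MulAction.exists_smul_eq L P' Q'
  exact ⟨n, n.2, conj_smul_eq_of_conj_smul_subgroupOf_eq hPL hQL (congrArg Sylow.toSubgroup hn)⟩

theorem exists_conj_eq_of_inf_eq [Finite G] (hG : Squarefree (Nat.card G)) {N H K : Subgroup G}
    [N.Normal] (hp : N.index.Prime) (hH : ¬ H ≤ N) (hK : ¬ K ≤ N) (hHK : H ⊓ N = K ⊓ N) :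
    ∃ g : G, MulAut.conj g • H = K := by
  have := Fact.mk hp
  have hM : ¬ N.index ∣ Nat.card (H ⊓ N : Subgroup G) := fun h =>
    not_dvd_card_of_dvd_index hG hp dvd_rfl (h.trans (card_dvd_of_le inf_le_right))
  obtain ⟨P, hPH, hP, hsupP⟩ :=
    exists_card_eq_prime_sup_eq inf_le_left hM (card_inf_mul_index_of_not_le hp hH).symm
  obtain ⟨Q, hQK, hQ, hsupQ⟩ :=
    exists_card_eq_prime_sup_eq inf_le_left (hHK ▸ hM) (card_inf_mul_index_of_not_le hp hK).symm
  have hle (J : Subgroup G) : J ≤ normalizer (J ⊓ N : Subgroup G) :=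
    (le_inf le_normalizer le_normalizer_of_normal).trans inf_normalizer_le_normalizer_inf
  obtain ⟨g, hgM, hg⟩ := exists_mem_conj_eq_of_card_eq_prime
    (hG.squarefree_of_dvd (card_subgroup_dvd_card _)) (hPH.trans (hle H))
    (hQK.trans (hHK ▸ hle K)) hP hQ
  refine ⟨g, ?_⟩
  rw [← hsupP, ← hsupQ, smul_sup, hg, conj_smul_eq_self_of_mem_normalizer hgM, hHK]

theorem exists_normal_index_eq_minFac [Finite G] (hG : Squarefree (Nat.card G))
    (h1 : Nat.card G ≠ 1) : ∃ N : Subgroup G, N.Normal ∧ N.index = (Nat.card G).minFac := by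
  have hp := Nat.minFac_prime h1
  have := Fact.mk hp
  let P : Sylow (Nat.card G).minFac G := default
  have hP : Nat.card P = (Nat.card G).minFac := by
    rw [P.card_eq_multiplicity, Nat.factorization_eq_one_of_squarefree hG hp (Nat.minFac_dvd _),
      pow_one]
  have hPcyc : IsCyclic P := isCyclic_of_prime_card hP
  have hcompl := IsCyclic.isComplement' rfl hPcyc
  exact ⟨_, MonoidHom.normal_ker _, hcompl.symm.index_eq_card.trans hP⟩

theorem exists_conj_eq_of_card_eq [Finite G] (hG : Squarefree (Nat.card G)) {H K : Subgroup G}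
    (hHK : Nat.card H = Nat.card K) : ∃ g : G, MulAut.conj g • H = K := by
  induction hn : Nat.card G using Nat.strong_induction_on generalizing G with
  | _ n ih =>
  subst hn
  rcases eq_or_ne (Nat.card G) 1 with h1 | h1
  · have := (Nat.card_eq_one_iff_unique.mp h1).1
    exact ⟨1, Subsingleton.elim _ _⟩
  obtain ⟨N, hN, hidx⟩ := exists_normal_index_eq_minFac hG h1
  have hp : N.index.Prime := hidx ▸ Nat.minFac_prime h1
  have hpN : ¬ N.index ∣ Nat.card N := not_dvd_card_of_dvd_index hG hp dvd_rfl
  have ihN {H K : Subgroup G} (hH : H ≤ N) (hK : K ≤ N) (hHK : Nat.card H = Nat.card K) :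
      ∃ g : G, MulAut.conj g • H = K := by
    have hlt : Nat.card N < Nat.card G := by
      rw [← card_mul_index N]
      exact lt_mul_right Nat.card_pos hp.one_lt
    obtain ⟨n, hn⟩ := ih _ hlt (hG.squarefree_of_dvd (card_subgroup_dvd_card N))
      (H := H.subgroupOf N) (K := K.subgroupOf N)
      (by rw [card_subgroupOf_of_le hH, card_subgroupOf_of_le hK, hHK]) rfl
    exact ⟨n, conj_smul_eq_of_conj_smul_subgroupOf_eq hH hK hn⟩
  by_cases hpH : N.index ∣ Nat.card H
  · have hpK : N.index ∣ Nat.card K := hHK ▸ hpH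
    have hnle {J : Subgroup G} (hJ : N.index ∣ Nat.card J) : ¬ J ≤ N :=
      fun hJN => hpN (hJ.trans (card_dvd_of_le hJN))
    obtain ⟨g, hg⟩ := ihN (H := H ⊓ N) (K := K ⊓ N) inf_le_right inf_le_right
      (Nat.eq_of_mul_eq_mul_right hp.pos (by
        rw [card_inf_mul_index_of_not_le hp (hnle hpH), card_inf_mul_index_of_not_le hp (hnle hpK),
          hHK]))
    obtain ⟨l, hl⟩ := exists_conj_eq_of_inf_eq hG hp (hnle ((card_conj_smul g H).symm ▸ hpH))
      (hnle hpK) (by rw [← hg, smul_inf, Normal.conj_smul_eq_self g N])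
    exact ⟨l * g, by rw [map_mul, mul_smul, hl]⟩
  · have hle {J : Subgroup G} (hJ : ¬ N.index ∣ Nat.card J) : J ≤ N := by
      by_contra hJN
      exact hJ ⟨_, by rw [← card_inf_mul_index_of_not_le hp hJN, mul_comm]⟩
    exact ihN (hle hpH) (hle (hHK ▸ hpH)) hHK

end Subgroup

/-- In a finite group of square-free order, two subgroups are conjugate if and only if
they have the same order. -/
theorem conjugate_iff_card_eq_of_squarefree (G : Type*) [Group G] [Fintype G]
    (hsq : Squarefree (Fintype.card G)) (H K : Subgroup G) :
    (∃ g : G, MulAut.conj g • H = K) ↔ Nat.card H = Nat.card K := by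
  refine ⟨fun ⟨g, hg⟩ => hg ▸ (Subgroup.card_conj_smul g H).symm,
    Subgroup.exists_conj_eq_of_card_eq ?_⟩
  rwa [Nat.card_eq_fintype_card]
end

section
/- Let G be a finite group and H, K subgroups such that the set of prime divisors of |H| and of |K| are disjoint and their union is the set of prime divisors of |G|, with |G| square-free. Then H ∩ K^g = {1} for all g in G, and there is exactly one (H,K)-double coset in G. -/
/-!
Since `|G|` is square-free, each of `|H|`, `|K|`, `|G|` is the product of its prime divisors, so
the hypotheses on prime divisors give `|H| * |K| = |G|` with `|H|`, `|K|` coprime. Coprimality makes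
`H` meet every conjugate of `K` trivially, and together with the order count it makes `H` and `K`
complements: `HK = G`, which is the single double coset `H 1 K`.
-/

open Pointwise

theorem Nat.mul_eq_of_dvd_of_primeFactors_union {a b n : ℕ} (hn : Squarefree n) (ha : a ∣ n)
    (hb : b ∣ n) (hdisj : Disjoint a.primeFactors b.primeFactors)
    (hunion : a.primeFactors ∪ b.primeFactors = n.primeFactors) : a * b = n := by
  rw [← prod_primeFactors_of_squarefree (hn.squarefree_of_dvd ha),
    ← prod_primeFactors_of_squarefree (hn.squarefree_of_dvd hb),
    ← prod_primeFactors_of_squarefree hn, ← Finset.prod_union hdisj, hunion]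

theorem Subgroup.card_pointwise_smul {G α : Type*} [Group G] [Group α] [MulDistribMulAction α G]
    (a : α) (K : Subgroup G) : Nat.card (a • K : Subgroup G) = Nat.card K :=
  (Nat.card_congr (K.equivSMul a).toEquiv).symm

namespace DoubleCoset

variable {G : Type*} [Group G] {H K : Subgroup G}

theorem mk_eq_mk_one_of_isComplement' (h : H.IsComplement' K) (b : G) : mk H K b = mk H K 1 := by
  obtain ⟨⟨x, y⟩, hxy⟩ := h.2 b
  exact ((eq H K 1 b).mpr ⟨x, x.2, y, y.2, by rw [mul_one]; exact hxy.symm⟩).symm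

theorem card_quotient_eq_one_of_isComplement' (h : H.IsComplement' K) :
    Nat.card (Quotient (H : Set G) (K : Set G)) = 1 := by
  have : Subsingleton (Quotient (H : Set G) (K : Set G)) :=
    ⟨fun x y => Quotient.inductionOn₂' x y fun a b =>
      (mk_eq_mk_one_of_isComplement' h a).trans (mk_eq_mk_one_of_isComplement' h b).symm⟩
  exact Nat.card_eq_one_iff_unique.mpr ⟨this, ⟨mk H K 1⟩⟩

end DoubleCoset

/-- If `G` has square-free order and `H`, `K` are subgroups whose sets of prime divisors are
disjoint with union the set of prime divisors of `|G|`, then `H ∩ K^g = 1` for all `g ∈ G`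
and there is exactly one `(H,K)`-double coset in `G`. -/
theorem inf_conj_eq_bot_and_one_double_coset (G : Type*) [Group G] [Fintype G]
    (hsq : Squarefree (Fintype.card G)) (H K : Subgroup G)
    (hdisj : Disjoint (Nat.card H).primeFactors (Nat.card K).primeFactors)
    (hunion : (Nat.card H).primeFactors ∪ (Nat.card K).primeFactors =
      (Fintype.card G).primeFactors) :
    (∀ g : G, H ⊓ (MulAut.conj g⁻¹ • K) = ⊥) ∧
      Nat.card (DoubleCoset.Quotient (H : Set G) (K : Set G)) = 1 := by
  rw [← Nat.card_eq_fintype_card] at hsq hunion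
  have hcop : Nat.Coprime (Nat.card H) (Nat.card K) :=
    (Nat.disjoint_primeFactors Nat.card_pos.ne' Nat.card_pos.ne').mp hdisj
  have hmul : Nat.card H * Nat.card K = Nat.card G :=
    Nat.mul_eq_of_dvd_of_primeFactors_union hsq (Subgroup.card_subgroup_dvd_card H)
      (Subgroup.card_subgroup_dvd_card K) hdisj hunion
  refine ⟨fun g => disjoint_iff.mp (Subgroup.disjoint_of_coprime_natCard ?_), ?_⟩
  · rwa [Subgroup.card_pointwise_smul]
  · exact DoubleCoset.card_quotient_eq_one_of_isComplement'
      (Subgroup.isComplement'_of_coprime hmul hcop)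
end

section
/- Let G be a finite group, H, L ≤ G, x, y ∈ G with y = l x⁻¹ h for some l ∈ L, h ∈ H, and let K ≤ H ∩ ˣL, Q ≤ L ∩ ʸH. Then the map α ↦ αl induces a bijection between the set of double cosets {α ∈ K^x\L/Q : xαy ∈ H} and the set of double cosets K^x\(L ∩ H^x)/Q^l. -/
/-!
Right multiplication by `l` carries the `(K^x, Q)`-double coset of `α` onto the
`(K^x, Q^l)`-double coset of `α l`, and since `x α y = x (α l) x⁻¹ h`, the condition
`x α y ∈ H` on `α ∈ L` says exactly that `α l ∈ L ∩ H^x`.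
-/

open Pointwise

namespace DoubleCoset

variable {G : Type*} [Group G]

theorem image_mul_right (a g : G) (s t : Set G) :
    (· * g) '' doubleCoset a s t = doubleCoset (a * g) s (MulAut.conj g⁻¹ • t) := by
  ext w
  simp only [Set.mem_image, mem_doubleCoset, Set.mem_smul_set, MulAut.smul_def,
    MulAut.conj_apply, inv_inv]
  constructor
  · rintro ⟨-, ⟨m, hm, n, hn, rfl⟩, rfl⟩
    exact ⟨m, hm, g⁻¹ * n * g, ⟨n, hn, rfl⟩, by group⟩
  · rintro ⟨m, hm, -, ⟨n, hn, rfl⟩, rfl⟩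
    exact ⟨m * a * n, ⟨m, hm, n, hn, rfl⟩, by group⟩

theorem image_mul_right_subgroup (a g : G) (s : Set G) (Q : Subgroup G) :
    (· * g) '' doubleCoset a s Q = doubleCoset (a * g) s ↑(MulAut.conj g⁻¹ • Q) := by
  rw [image_mul_right, Subgroup.coe_pointwise_smul]

end DoubleCoset

theorem mul_mul_mem_iff_mul_mem_conj_inv {G : Type*} [Group G] {H : Subgroup G} {x y l h : G}
    (hh : h ∈ H) (hy : y = l * x⁻¹ * h) (α : G) : x * α * y ∈ H ↔ α * l ∈ MulAut.conj x⁻¹ • H := by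
  have hxy : x * α * y = MulAut.conj x (α * l) * h := by simp only [hy, MulAut.conj_apply]; group
  rw [hxy, Subgroup.mul_mem_cancel_right _ hh, Subgroup.mem_pointwise_smul_iff_inv_smul_mem,
    ← map_inv, inv_inv, MulAut.smul_def]

open DoubleCoset in
theorem image_doubleCosets_mul_right {G : Type*} [Group G] {H L : Subgroup G} (K Q : Subgroup G)
    {x y l h : G} (hl : l ∈ L) (hh : h ∈ H) (hy : y = l * x⁻¹ * h) :
    (Equiv.Set.congr (Equiv.mulRight l)) ''
        {S : Set G | ∃ α, α ∈ L ∧ x * α * y ∈ H ∧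
          S = doubleCoset α ((MulAut.conj x⁻¹ • K : Subgroup G) : Set G) (Q : Set G)} =
      {S : Set G | ∃ β, β ∈ L ⊓ (MulAut.conj x⁻¹ • H) ∧
          S = doubleCoset β ((MulAut.conj x⁻¹ • K : Subgroup G) : Set G)
            ((MulAut.conj l⁻¹ • Q : Subgroup G) : Set G)} := by
  have hmem (α : G) : α ∈ L ∧ x * α * y ∈ H ↔ α * l ∈ L ⊓ MulAut.conj x⁻¹ • H := by
    rw [Subgroup.mem_inf, Subgroup.mul_mem_cancel_right _ hl,
      mul_mul_mem_iff_mul_mem_conj_inv hh hy]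
  ext T
  simp only [Equiv.Set.congr_apply, Equiv.coe_mulRight, Set.mem_image, Set.mem_ofPred_eq]
  constructor
  · rintro ⟨-, ⟨α, hαL, hα, rfl⟩, rfl⟩
    exact ⟨α * l, (hmem α).1 ⟨hαL, hα⟩, image_mul_right_subgroup ..⟩
  · rintro ⟨β, hβ, rfl⟩
    obtain ⟨hL, hH⟩ := (hmem (β * l⁻¹)).2 (by rwa [inv_mul_cancel_right])
    exact ⟨_, ⟨β * l⁻¹, hL, hH, rfl⟩, by rw [image_mul_right_subgroup, inv_mul_cancel_right]⟩

theorem doset_bijection_general (G : Type*) [Group G] (H L K Q : Subgroup G) (x y l h : G)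
    (hl : l ∈ L) (hh : h ∈ H) (hy : y = l * x⁻¹ * h) :
    ∃ e : {S : Set G | ∃ α, α ∈ L ∧ x * α * y ∈ H ∧
            S = DoubleCoset.doubleCoset α ((MulAut.conj x⁻¹ • K : Subgroup G) : Set G) (Q : Set G)} ≃
          {S : Set G | ∃ β, β ∈ L ⊓ (MulAut.conj x⁻¹ • H) ∧
            S = DoubleCoset.doubleCoset β ((MulAut.conj x⁻¹ • K : Subgroup G) : Set G)
              ((MulAut.conj l⁻¹ • Q : Subgroup G) : Set G)},
      ∀ (α : G) (hαL : α ∈ L) (hα : x * α * y ∈ H),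
        (e ⟨DoubleCoset.doubleCoset α ((MulAut.conj x⁻¹ • K : Subgroup G) : Set G) (Q : Set G),
            ⟨α, hαL, hα, rfl⟩⟩ : Set G) =
          DoubleCoset.doubleCoset (α * l) ((MulAut.conj x⁻¹ • K : Subgroup G) : Set G)
            ((MulAut.conj l⁻¹ • Q : Subgroup G) : Set G) :=
  ⟨((Equiv.Set.congr (Equiv.mulRight l)).image _).trans
      (Equiv.setCongr (image_doubleCosets_mul_right K Q hl hh hy)),
    fun _ _ _ => DoubleCoset.image_mul_right_subgroup ..⟩

/-- Let `y = l x⁻¹ h` with `l ∈ L`, `h ∈ H`, and let `K ≤ H ∩ ˣL`, `Q ≤ L ∩ ʸH`. The map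
`α ↦ α l` induces a bijection between the set of `(K^x, Q)`-double cosets of elements
`α ∈ L` with `x α y ∈ H` and the set of `(K^x, Q^l)`-double cosets in `L ∩ H^x`. -/
theorem doset_bijection (G : Type*) [Group G] (H L K Q : Subgroup G) (x y l h : G)
    (hl : l ∈ L) (hh : h ∈ H) (hy : y = l * x⁻¹ * h)
    (hK : K ≤ H ⊓ (MulAut.conj x • L)) (hQ : Q ≤ L ⊓ (MulAut.conj y • H)) :
    ∃ e : {S : Set G | ∃ α, α ∈ L ∧ x * α * y ∈ H ∧
            S = DoubleCoset.doubleCoset α ((MulAut.conj x⁻¹ • K : Subgroup G) : Set G) (Q : Set G)} ≃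
          {S : Set G | ∃ β, β ∈ L ⊓ (MulAut.conj x⁻¹ • H) ∧
            S = DoubleCoset.doubleCoset β ((MulAut.conj x⁻¹ • K : Subgroup G) : Set G)
              ((MulAut.conj l⁻¹ • Q : Subgroup G) : Set G)},
      ∀ (α : G) (hαL : α ∈ L) (hα : x * α * y ∈ H),
        (e ⟨DoubleCoset.doubleCoset α ((MulAut.conj x⁻¹ • K : Subgroup G) : Set G) (Q : Set G),
            ⟨α, hαL, hα, rfl⟩⟩ : Set G) =
          DoubleCoset.doubleCoset (α * l) ((MulAut.conj x⁻¹ • K : Subgroup G) : Set G)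
            ((MulAut.conj l⁻¹ • Q : Subgroup G) : Set G) :=
  doset_bijection_general G H L K Q x y l h hl hh hy
end

section
/- Let G be a finite group, H ≤ K ≤ G subgroups, and work in the Burnside algebra over a field of characteristic zero. Then Ind_K^G(e_H^K) = (|N_G(H)|/|N_K(H)|) · e_H^G. -/
/-!
The mark of `Ind_K^G(e_H^K)` at `U` is `1/|K|` times the number of `g ∈ G` with
`g⁻¹Ug` conjugate to `H` inside `K`. This is zero unless `U` is `G`-conjugate to `H`, say
`g₀Ug₀⁻¹ = H`; then the condition reads `κ g⁻¹ g₀⁻¹ ∈ N_G(H)` for some `κ ∈ K`. Double counting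
the pairs `(g, κ)` satisfying it, each `κ` has `|N_G(H)|` partners and each admissible `g` has
`|N_G(H) ∩ K| = |N_K(H)|` partners, so there are `|K| |N_G(H)| / |N_K(H)|` admissible `g`.
-/

open Pointwise

attribute [local instance] Classical.propDecidable

namespace Subgroup

variable {G : Type*} [Group G]

theorem conj_smul_eq_self_iff_mem_normalizer {H : Subgroup G} {x : G} :
    MulAut.conj x • H = H ↔ x ∈ normalizer (H : Set G) :=
  mem_normalizer_iff_map_conj_eq.symm

theorem conj_smul_eq_iff_mul_inv_mem_normalizer {U H : Subgroup G} {g₀ : G}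
    (hg₀ : MulAut.conj g₀ • U = H) (x : G) :
    MulAut.conj x • U = H ↔ x * g₀⁻¹ ∈ normalizer (H : Set G) := by
  rw [← conj_smul_eq_self_iff_mem_normalizer, map_mul, mul_smul, ← hg₀, map_inv,
    inv_smul_smul]

theorem exists_conj_smul_subgroupOf_eq_iff {K H V : Subgroup G} (hHK : H ≤ K) :
    (V ≤ K ∧ ∃ κ : K, MulAut.conj κ • V.subgroupOf K = H.subgroupOf K) ↔
      ∃ κ : K, MulAut.conj (κ : G) • V = H := by
  constructor
  · rintro ⟨hVK, κ, hκ⟩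
    refine ⟨κ, ?_⟩
    rwa [conj_smul_subgroupOf hVK, subgroupOf_inj, inf_of_le_left (conj_smul_le_of_le hVK κ),
      inf_of_le_left hHK] at hκ
  · rintro ⟨κ, hκ⟩
    have hVK : V ≤ K := by
      rw [eq_inv_smul_iff.mpr hκ, ← map_inv]
      exact conj_smul_le_of_le hHK κ⁻¹
    exact ⟨hVK, κ, by rw [conj_smul_subgroupOf hVK, hκ]⟩

open Finset

variable [Fintype G]

theorem card_filter_mul_inv_mul_mem (N : Subgroup G) (a c : G) :
    #{g | a * g⁻¹ * c ∈ N} = Nat.card N := by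
  rw [Nat.card_eq_fintype_card, ← Fintype.card_coe]
  refine Fintype.card_congr <| Equiv.subtypeEquiv
    ((Equiv.inv G).trans ((Equiv.mulLeft a).trans (Equiv.mulRight c))) fun g => ?_
  simp

theorem card_filter_mul_mem_eq_card_inf {N K : Subgroup G} {a : G} {κ₀ : K}
    (h : (κ₀ : G) * a ∈ N) : #{κ : K | (κ : G) * a ∈ N} = Nat.card ↥(N ⊓ K) := by
  rw [← Nat.card_congr (subgroupOfEquivOfLe (inf_le_right : N ⊓ K ≤ K)).toEquiv,
    inf_subgroupOf_right, Nat.card_eq_fintype_card, ← Fintype.card_coe]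
  refine Fintype.card_congr <| Equiv.subtypeEquiv (Equiv.mulRight κ₀⁻¹) fun κ => ?_
  rw [mem_filter, and_iff_right (mem_univ κ), Equiv.coe_mulRight, mem_subgroupOf, coe_mul, coe_inv,
    ← N.mul_mem_cancel_right h (y := κ * (κ₀ : G)⁻¹), mul_assoc, inv_mul_cancel_left]

theorem card_filter_exists_mul_inv_mul_mem_mul_card_inf (N K : Subgroup G) (c : G) :
    #{g | ∃ κ : K, (κ : G) * g⁻¹ * c ∈ N} * Nat.card ↥(N ⊓ K) = Nat.card K * Nat.card N := by
  rw [Nat.card_eq_fintype_card (α := K), ← card_univ]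
  refine card_mul_eq_card_mul (fun g (κ : K) => (κ : G) * g⁻¹ * c ∈ N) ?_ ?_
  · intro g hg
    obtain ⟨κ₀, hκ₀⟩ := (mem_filter.mp hg).2
    simp only [bipartiteAbove, mul_assoc] at hκ₀ ⊢
    exact card_filter_mul_mem_eq_card_inf hκ₀
  · intro κ _
    rw [bipartiteBelow, filter_filter, ← card_filter_mul_inv_mul_mem N κ c]
    congr 1
    exact filter_congr fun g _ => and_iff_right_of_imp fun hg => ⟨κ, hg⟩

end Subgroup

/-- Let `H ≤ K ≤ G`. In the rational Burnside algebras (identified with their ghost rings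
via the injective mark homomorphisms), induction satisfies
`Ind_K^G (e_H^K) = (|N_G(H)| / |N_K(H)|) · e_H^G`. Here the mark of `Ind_K^G(Y)` at a
subgroup `U ≤ G` is `(1/|K|) ∑_{g ∈ G, g⁻¹Ug ≤ K} m_Y(g⁻¹Ug)`, and `e_H^K`, `e_H^G` are
the primitive idempotents, whose marks are the indicator of the conjugacy class of `H`. -/
theorem ind_idempotent (G : Type*) [Group G] [Fintype G] (K H : Subgroup G) (hHK : H ≤ K)
    (eHK : Subgroup K → ℚ) (eHG : Subgroup G → ℚ)
    (heHK : ∀ V : Subgroup K,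
      eHK V = if ∃ κ : K, MulAut.conj κ • V = H.subgroupOf K then 1 else 0)
    (heHG : ∀ U : Subgroup G,
      eHG U = if ∃ g : G, MulAut.conj g • U = H then 1 else 0) :
    ∀ U : Subgroup G,
      (1 / (Nat.card K : ℚ)) * ∑ g : G,
          (if (MulAut.conj g⁻¹ • U : Subgroup G) ≤ K then
            eHK ((MulAut.conj g⁻¹ • U : Subgroup G).subgroupOf K) else 0) =
        ((Nat.card (Subgroup.normalizer (H : Set G)) : ℚ) / (Nat.card ↥(Subgroup.normalizer (H : Set G) ⊓ K) : ℚ)) * eHG U := by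
  intro U
  have hsummand (g : G) :
      (if (MulAut.conj g⁻¹ • U : Subgroup G) ≤ K then
        eHK ((MulAut.conj g⁻¹ • U : Subgroup G).subgroupOf K) else 0) =
      if ∃ κ : K, MulAut.conj ((κ : G) * g⁻¹) • U = H then 1 else 0 := by
    simp only [map_mul, mul_smul, ← Subgroup.exists_conj_smul_subgroupOf_eq_iff hHK, heHK,
      ite_and]
  simp only [hsummand, Finset.sum_boole, heHG]
  split_ifs with hU
  · obtain ⟨g₀, hg₀⟩ := hU
    simp only [Subgroup.conj_smul_eq_iff_mul_inv_mem_normalizer hg₀]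
    have hcount := Subgroup.card_filter_exists_mul_inv_mul_mem_mul_card_inf
      (Subgroup.normalizer (H : Set G)) K g₀⁻¹
    have hK : (Nat.card K : ℚ) ≠ 0 := Nat.cast_ne_zero.mpr Nat.card_pos.ne'
    have hNK : (Nat.card ↥(Subgroup.normalizer (H : Set G) ⊓ K) : ℚ) ≠ 0 :=
      Nat.cast_ne_zero.mpr Nat.card_pos.ne'
    rw [mul_one, one_div, inv_mul_eq_div, div_eq_div_iff hK hNK]
    exact_mod_cast hcount.trans (mul_comm _ _)
  · have hnone (g : G) : ¬ ∃ κ : K, MulAut.conj ((κ : G) * g⁻¹) • U = H :=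
      fun ⟨κ, hκ⟩ => hU ⟨_, hκ⟩
    rw [Finset.filter_false_of_mem fun g _ => hnone g]
    simp
end

section
/- Let G be a finite group and H ≤ G. In the rational Burnside algebra QB(G), the primitive idempotent e_H^G equals (1/|N_G(H)|) · Σ_{K ≤ H} |K| μ(K,H) [G/K], where μ is the Möbius function of the subgroup lattice of H. -/
/-!
Evaluate both sides at the marks of `U`. Since the stabilizer of the coset `gA` is `gAg⁻¹`,
`|A| · |(G/A)^U|` counts the `g` with `g U g⁻¹ ≤ A`. Exchanging the sums over `A ≤ H` and over `g`,
the defining identity of `μ` collapses the inner sum to `[g U g⁻¹ = H]`, and the `g` conjugating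
`U` onto `H` form a coset of `N_G(H)` when there is one.
-/

open Pointwise

attribute [local instance] Classical.propDecidable

section

variable {G : Type*} [Group G]

theorem Subgroup.conj_smul_eq_map (g : G) (A : Subgroup G) :
    MulAut.conj g • A = A.map (MulAut.conj g) :=
  rfl

theorem MulAction.stabilizer_quotient_mk (A : Subgroup G) (g : G) :
    stabilizer G (g : G ⧸ A) = MulAut.conj g • A := by
  rw [Subgroup.conj_smul_eq_map]
  simpa using stabilizer_smul_eq_stabilizer_map_conj g ((1 : G) : G ⧸ A)

theorem MulAction.mem_fixedPoints_iff_le_stabilizer {X : Type*} [MulAction G X] (U : Subgroup G)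
    (x : X) : x ∈ fixedPoints U X ↔ U ≤ stabilizer G x :=
  ⟨fun h u hu => h ⟨u, hu⟩, fun h u => h u.2⟩

theorem QuotientGroup.mk_mem_fixedPoints_iff (U A : Subgroup G) (g : G) :
    (g : G ⧸ A) ∈ MulAction.fixedPoints U (G ⧸ A) ↔ MulAut.conj g⁻¹ • U ≤ A := by
  refine (MulAction.mem_fixedPoints_iff_le_stabilizer U _).trans ?_
  rw [MulAction.stabilizer_quotient_mk, Subgroup.subset_pointwise_smul_iff, map_inv]

theorem card_mul_card_fixedPoints_quotient (U A : Subgroup G) :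
    Nat.card A * Nat.card (MulAction.fixedPoints U (G ⧸ A)) =
      Nat.card {g : G // MulAut.conj g • U ≤ A} := by
  rw [← Nat.card_prod, ← Nat.card_congr (QuotientGroup.preimageMkEquivSubgroupProdSet A _)]
  exact Nat.card_congr <| (Equiv.inv G).subtypeEquiv fun g =>
    (QuotientGroup.mk_mem_fixedPoints_iff U A g)

theorem card_conj_smul_eq (U H : Subgroup G) :
    Nat.card {g : G // MulAut.conj g • U = H} =
      if ∃ g : G, MulAut.conj g • U = H then Nat.card (Subgroup.normalizer (H : Set G)) else 0 := by
  split_ifs with h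
  · obtain ⟨g₀, hg₀⟩ := h
    refine (Nat.card_congr ?_).symm
    refine (Equiv.subtypeEquivRight (q := fun n => MulAut.conj n • H = H) fun n => ?_).trans
      ((Equiv.mulRight g₀).subtypeEquiv fun n => ?_)
    · rw [Subgroup.mem_normalizer_iff_map_conj_eq, Subgroup.conj_smul_eq_map]
    · rw [Equiv.coe_mulRight, map_mul, mul_smul, hg₀]
  · exact Nat.card_eq_zero.2 (.inl ⟨fun g => h ⟨g, g.2⟩⟩)

end

theorem sum_moebius_interval_eq_ite {α R : Type*} [PartialOrder α] [Fintype α]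
    [AddCommGroupWithOne R] (μ : α → α → ℤ)
    (hμ : ∀ A B : α, A ≤ B →
      (∑ᶠ C : α, if A ≤ C ∧ C ≤ B then μ C B else 0) = if A = B then 1 else 0) (A B : α) :
    ∑ C, (if A ≤ C ∧ C ≤ B then (μ C B : R) else 0) = if A = B then 1 else 0 := by
  by_cases hAB : A ≤ B
  · have := congrArg (Int.cast : ℤ → R) (hμ A B hAB)
    rw [finsum_eq_sum_of_fintype] at this
    push_cast at this
    exact this
  · rw [if_neg fun h => hAB h.le]
    exact Finset.sum_eq_zero fun C _ => if_neg fun h => hAB (h.1.trans h.2)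

theorem idempotent_moebius_formula_general (G : Type*) [Group G] [Fintype G] (H : Subgroup G)
    (μ : Subgroup G → Subgroup G → ℤ)
    (hμ : ∀ A B : Subgroup G, A ≤ B →
      (∑ᶠ C : Subgroup G, if A ≤ C ∧ C ≤ B then μ C B else 0) =
        if A = B then 1 else 0) :
    ∀ U : Subgroup G,
      (if ∃ g : G, MulAut.conj g • U = H then (1 : ℚ) else 0) =
        (1 / (Nat.card (Subgroup.normalizer (H : Set G)) : ℚ)) *
          ∑ᶠ A : Subgroup G, (if A ≤ H then
            (Nat.card A : ℚ) * (μ A H : ℚ) *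
              (Nat.card (MulAction.fixedPoints U (G ⧸ A)) : ℚ) else 0) := by
  intro U
  have := Fintype.ofFinite (Subgroup G)
  have hN : (Nat.card (Subgroup.normalizer (H : Set G)) : ℚ) ≠ 0 := by
    exact_mod_cast Nat.card_pos.ne'
  rw [eq_comm, one_div, inv_mul_eq_iff_eq_mul₀ hN, finsum_eq_sum_of_fintype]
  calc ∑ A, (if A ≤ H then (Nat.card A : ℚ) * (μ A H : ℚ) *
          (Nat.card (MulAction.fixedPoints U (G ⧸ A)) : ℚ) else 0)
      = ∑ A, ∑ g : G, if MulAut.conj g • U ≤ A ∧ A ≤ H then (μ A H : ℚ) else 0 := by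
        refine Finset.sum_congr rfl fun A _ => ?_
        rw [mul_right_comm, ← Nat.cast_mul, card_mul_card_fixedPoints_quotient,
          Nat.card_eq_fintype_card, Fintype.card_subtype, ← Finset.sum_boole, Finset.sum_mul]
        by_cases hA : A ≤ H <;> simp [hA]
    _ = ∑ g : G, ∑ A, if MulAut.conj g • U ≤ A ∧ A ≤ H then (μ A H : ℚ) else 0 :=
        Finset.sum_comm
    _ = Nat.card {g : G // MulAut.conj g • U = H} := by
        simp only [sum_moebius_interval_eq_ite μ hμ]
        rw [Finset.sum_boole, Nat.card_eq_fintype_card, Fintype.card_subtype]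
    _ = _ := by
        rw [card_conj_smul_eq]
        split_ifs <;> simp

/-- In the rational Burnside algebra of a finite group `G` (identified with its ghost ring
via the injective mark homomorphism), the primitive idempotent `e_H^G` equals
`(1/|N_G(H)|) ∑_{K ≤ H} |K| μ(K,H) [G/K]`, where `μ` is the Möbius function of the
subgroup lattice. The mark of `e_H^G` at `U` is the indicator that `U` is conjugate to `H`,
and the mark of `[G/K]` at `U` is the number of `U`-fixed points of `G/K`. -/
theorem idempotent_moebius_formula (G : Type*) [Group G] [Fintype G] (H : Subgroup G)
    (μ : Subgroup G → Subgroup G → ℤ)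
    (hμ₀ : ∀ A B : Subgroup G, ¬A ≤ B → μ A B = 0)
    (hμ : ∀ A B : Subgroup G, A ≤ B →
      (∑ᶠ C : Subgroup G, if A ≤ C ∧ C ≤ B then μ C B else 0) =
        if A = B then 1 else 0) :
    ∀ U : Subgroup G,
      (if ∃ g : G, MulAut.conj g • U = H then (1 : ℚ) else 0) =
        (1 / (Nat.card (Subgroup.normalizer (H : Set G)) : ℚ)) *
          ∑ᶠ A : Subgroup G, (if A ≤ H then
            (Nat.card A : ℚ) * (μ A H : ℚ) *
              (Nat.card (MulAction.fixedPoints U (G ⧸ A)) : ℚ) else 0) :=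
  idempotent_moebius_formula_general G H μ hμ
end

section
/- Let G be a finite abelian group and k a field of characteristic zero. Define φ(X) = Σ_{H ∈ [s(G)]} (1/|N_G(H)|)|X^H| on kB(G). Then the determinant of the bilinear form b(X,Y) = φ(XY) in the basis of transitive G-sets equals Π_{H ∈ [s(G)]} |N_G(H)|/|H|² = 1. -/
/-!
Counting fixed points turns the Gram matrix into `Mᵀ D M`, where `M L H = |(G/H)^L|` is the table
of marks and `D = diag |N_G(L)|⁻¹`. For abelian `G`, `L` fixes a point of `G/H` exactly when
`L ≤ H`, and then fixes all of it, so `M` is triangular for inclusion with diagonal `|G/H|`. Hence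
the determinant is `∏ |G/H|² / |G| = ∏ |G| / |H|²`. It equals `1` because `H ↦ H^⊥` (annihilator
in the dual group `Ĝ ≅ G`) permutes the subgroups of `G` with `|H^⊥| = |G/H|`.
-/

open MulAction Matrix

theorem MulAction.card_fixedPoints_prod (M α β : Type*) [Monoid M] [MulAction M α]
    [MulAction M β] :
    Nat.card (fixedPoints M (α × β)) =
      Nat.card (fixedPoints M α) * Nat.card (fixedPoints M β) := by
  rw [← Nat.card_prod]
  exact Nat.card_congr
    { toFun x := (⟨x.1.1, fun m => congrArg Prod.fst (x.2 m)⟩,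
        ⟨x.1.2, fun m => congrArg Prod.snd (x.2 m)⟩)
      invFun x := ⟨(x.1, x.2), fun m => Prod.ext (x.1.2 m) (x.2.2 m)⟩
      left_inv _ := rfl
      right_inv _ := rfl }

namespace QuotientGroup

variable {G : Type*} [Group G] (L H : Subgroup G) [H.Normal]

theorem mem_fixedPoints_iff (x : G ⧸ H) : x ∈ fixedPoints L (G ⧸ H) ↔ L ≤ H := by
  induction x using QuotientGroup.induction_on with
  | H g =>
    have smul_mk (l : L) : l • (g : G ⧸ H) = (l : G ⧸ H) * g := rfl
    simp only [mem_fixedPoints, smul_mk, mul_eq_right, eq_one_iff, Subtype.forall, SetLike.le_def]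

theorem card_fixedPoints_of_le (h : L ≤ H) :
    Nat.card (fixedPoints L (G ⧸ H)) = Nat.card (G ⧸ H) := by
  rw [Set.eq_univ_of_forall fun x => (mem_fixedPoints_iff L H x).mpr h, Nat.card_univ]

theorem card_fixedPoints_of_not_le (h : ¬L ≤ H) : Nat.card (fixedPoints L (G ⧸ H)) = 0 := by
  rw [Set.eq_empty_of_forall_notMem fun x => (mem_fixedPoints_iff L H x).not.mpr h,
    Nat.card_of_isEmpty]

end QuotientGroup

theorem Matrix.det_eq_prod_diag_of_not_le_eq_zero {m R : Type*} [PartialOrder m] [Fintype m]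
    [DecidableEq m] [CommRing R] {M : Matrix m m R} (hM : ∀ i j, ¬i ≤ j → M i j = 0) :
    M.det = ∏ i, M i i := by
  let e : m ≃ LinearExtension m := Equiv.refl m
  let : Fintype (LinearExtension m) := inferInstanceAs (Fintype m)
  let : DecidableEq (LinearExtension m) := inferInstanceAs (DecidableEq m)
  have hupper : (reindex e e M).IsUpperTriangular := fun i j hji =>
    hM _ _ fun hij => (toLinearExtension.monotone hij).not_gt hji
  rw [← det_reindex_self e M, det_of_isUpperTriangular hupper]
  rfl

theorem CommGroup.prod_card_quotient_eq_prod_card (G : Type*) [CommGroup G] [Finite G]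
    [Fintype (Subgroup G)] :
    ∏ H : Subgroup G, Nat.card (G ⧸ H) = ∏ H : Subgroup G, Nat.card H := by
  have : NeZero (Monoid.exponent G) := ⟨Monoid.exponent_ne_zero_of_finite⟩
  let e := (monoidHom_mulEquiv_of_hasEnoughRootsOfUnity G Circle).some
  let σ : Subgroup G ≃ Subgroup G :=
    (subgroupOrderIsoSubgroupMonoidHom G Circle).toEquiv.trans
      (OrderDual.ofDual.trans e.mapSubgroup.toEquiv)
  refine Fintype.prod_equiv σ _ _ fun H => ?_
  rw [← card_subgroupOrderIsoSubgroupMonoidHom Circle H]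
  exact (Subgroup.card_map_of_injective e.injective).symm

section BurnsideAlgebra

variable (G : Type*) [Group G]

noncomputable def tableOfMarks (R : Type*) [NatCast R] : Matrix (Subgroup G) (Subgroup G) R :=
  Matrix.of fun L H => Nat.card (fixedPoints L (G ⧸ H))

/-- The entry at `(H, K)` is `b(G/H, G/K) = φ(G/H × G/K)`. -/
noncomputable def burnsideGram [Fintype (Subgroup G)] : Matrix (Subgroup G) (Subgroup G) ℚ :=
  Matrix.of fun H K => ∑ L : Subgroup G, (1 / (Nat.card (Subgroup.normalizer (L : Set G)) : ℚ)) *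
    (Nat.card (fixedPoints L ((G ⧸ H) × (G ⧸ K))) : ℚ)

theorem burnsideGram_eq_transpose_mul_diagonal_mul [Fintype (Subgroup G)]
    [DecidableEq (Subgroup G)] :
    burnsideGram G = (tableOfMarks G ℚ)ᵀ *
      diagonal (fun L : Subgroup G => (Nat.card (Subgroup.normalizer (L : Set G)) : ℚ)⁻¹) *
      tableOfMarks G ℚ := by
  ext H K
  rw [mul_apply]
  refine Finset.sum_congr rfl fun L _ => ?_
  rw [mul_diagonal, transpose_apply]
  simp only [tableOfMarks, of_apply, one_div]
  -- `L` acts on the product by restricting the `G`-action, which agrees with the product of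
  -- the restricted actions only up to unfolding, so `rw` cannot use the lemma directly.
  have hprod : Nat.card (fixedPoints L ((G ⧸ H) × (G ⧸ K))) =
      Nat.card (fixedPoints L (G ⧸ H)) * Nat.card (fixedPoints L (G ⧸ K)) :=
    card_fixedPoints_prod L (G ⧸ H) (G ⧸ K)
  rw [hprod, Nat.cast_mul]
  ring

theorem det_burnsideGram [Fintype (Subgroup G)] [DecidableEq (Subgroup G)] :
    (burnsideGram G).det = (tableOfMarks G ℚ).det ^ 2 *
      ∏ L : Subgroup G, (Nat.card (Subgroup.normalizer (L : Set G)) : ℚ)⁻¹ := by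
  rw [burnsideGram_eq_transpose_mul_diagonal_mul, det_mul, det_mul, det_transpose, det_diagonal]
  ring

end BurnsideAlgebra

theorem CommGroup.det_tableOfMarks (G R : Type*) [CommGroup G] [CommRing R]
    [Fintype (Subgroup G)] [DecidableEq (Subgroup G)] :
    (tableOfMarks G R).det = ∏ H : Subgroup G, (Nat.card (G ⧸ H) : R) := by
  rw [det_eq_prod_diag_of_not_le_eq_zero fun L H h => ?_]
  · simp only [tableOfMarks, of_apply, QuotientGroup.card_fixedPoints_of_le _ _ le_rfl]
  · simp only [tableOfMarks, of_apply, QuotientGroup.card_fixedPoints_of_not_le _ _ h,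
      Nat.cast_zero]

/-- Let `G` be a finite abelian group and `k = ℚ`. For the linear form
`φ(X) = ∑_{H ≤ G} (1/|N_G(H)|) |X^H|` on the Burnside algebra (for abelian `G` all
subgroups are their own conjugacy class), the Gram matrix of `b(X,Y) = φ(X·Y)` in the
basis of transitive `G`-sets has determinant `∏_{H ≤ G} |N_G(H)|/|H|²`, which equals `1`. -/
theorem det_gram_abelian (G : Type*) [CommGroup G] [Fintype G]
    [Fintype (Subgroup G)] [DecidableEq (Subgroup G)] :
    (Matrix.det (Matrix.of fun H K : Subgroup G =>
        ∑ L : Subgroup G, (1 / (Nat.card (Subgroup.normalizer (L : Set G)) : ℚ)) *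
          (Nat.card (MulAction.fixedPoints L ((G ⧸ H) × (G ⧸ K))) : ℚ)) =
      ∏ H : Subgroup G, (Nat.card (Subgroup.normalizer (H : Set G)) : ℚ) / (Nat.card H : ℚ) ^ 2) ∧
    Matrix.det (Matrix.of fun H K : Subgroup G =>
        ∑ L : Subgroup G, (1 / (Nat.card (Subgroup.normalizer (L : Set G)) : ℚ)) *
          (Nat.card (MulAction.fixedPoints L ((G ⧸ H) × (G ⧸ K))) : ℚ)) = 1 := by
  change (burnsideGram G).det = _ ∧ (burnsideGram G).det = 1
  have card_normalizer (H : Subgroup G) :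
      Nat.card (Subgroup.normalizer (H : Set G)) = Nat.card G := by
    rw [Subgroup.normalizer_eq_top, Subgroup.card_top]
  have card_index (H : Subgroup G) : (Nat.card G : ℚ) = Nat.card (G ⧸ H) * Nat.card H := by
    rw [H.card_eq_card_quotient_mul_card_subgroup, Nat.cast_mul]
  have hdet : (burnsideGram G).det = ∏ H : Subgroup G, (Nat.card (G ⧸ H) : ℚ) / Nat.card H := by
    rw [det_burnsideGram, CommGroup.det_tableOfMarks, ← Finset.prod_pow, ← Finset.prod_mul_distrib]
    refine Finset.prod_congr rfl fun H _ => ?_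
    rw [card_normalizer, card_index H]
    field_simp
  constructor
  · rw [hdet]
    refine Finset.prod_congr rfl fun H _ => ?_
    rw [card_normalizer, card_index H]
    field_simp
  · rw [hdet, Finset.prod_div_distrib, ← Nat.cast_prod, ← Nat.cast_prod,
      CommGroup.prod_card_quotient_eq_prod_card, div_self]
    exact Nat.cast_ne_zero.mpr (Finset.prod_ne_zero_iff.mpr fun H _ => Nat.card_pos.ne')
end

section
/- Let G be a finite group and p a prime. There is no nondegenerate (over Z, i.e. with unit determinant) associative symmetric bilinear form on the integral Burnside ring B(C_{p²}) of the cyclic group of order p². Concretely: if M is the 3×3 matrix with rows (a, b, c), (b, pb, pc), (c, pc, p²c) for integers a,b,c, then p divides det(M). -/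
/-- The determinant of the Gram matrix of any associative symmetric bilinear form on the
Burnside ring of a cyclic group of order `p²` is divisible by `p`: concretely, `p` divides
the determinant of the matrix with rows `(a, b, c)`, `(b, pb, pc)`, `(c, pc, p²c)`. -/
theorem prime_dvd_det_burnside_gram (p : ℕ) (hp : p.Prime) (a b c : ℤ) :
    (p : ℤ) ∣ Matrix.det !![a, b, c; b, (p : ℤ) * b, (p : ℤ) * c;
      c, (p : ℤ) * c, (p : ℤ) ^ 2 * c] := by
  simp [Matrix.det_fin_three]
  exact ⟨(p : ℤ)^2 * a * b * c - (p : ℤ) * a * c^2 - (p : ℤ) * b^2 * c + b * c^2, by ring⟩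
end
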